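/- Let L_h denote the left-hand side of the fourth-order compact Helmholtz scheme with step h and wavenumber k, and let u(x,y) = e^{i(ax+by)} with a² + b² = k². Then L_h applied to the grid samples u_{m,n} = u(mh, nh) satisfies L_h u_{m,n} = O(h⁴) · u_{m,n} as h → 0; i.e., the symbol of the scheme applied to an exact plane-wave solution vanishes to fourth order in h. -/

import Mathlib

open Real Asymptotics

set_option maxHeartbeats 1600000

lemma poly_bound {t : ℝ} (h2 : t ^ 2 ≤ 1) (h4 : t ^ 4 ≤ 1) :
    |1 - t ^ 2 / 2 + t ^ 4 / 24| ≤ 2 := by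
  rw [abs_le]
  constructor <;> nlinarith [sq_nonneg t, sq_nonneg (t ^ 2)]

lemma lin_bound {P s c : ℝ} (hP : |P| ≤ 2) (h0 : 0 ≤ s) (hs : s ≤ c) :
    |8 + 4 * P + s| ≤ 16 + c := by
  rw [abs_le] at hP ⊢
  constructor <;> linarith


open Finset Complex in
lemma cos6_bound {x : ℝ} (hx : |x| ≤ 1) :
    |Real.cos x - (1 - x ^ 2 / 2 + x ^ 4 / 24)| ≤ |x| ^ 6 := by
  have habs : ‖(x : ℂ) * I‖ ≤ 1 := by simpa using hx
  have habs' : ‖-(x : ℂ) * I‖ ≤ 1 := by simpa using hx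
  have h1 := Complex.exp_bound habs (n := 6) (by norm_num)
  have h2 := Complex.exp_bound habs' (n := 6) (by norm_num)
  have hid : ((Real.cos x - (1 - x ^ 2 / 2 + x ^ 4 / 24) : ℝ) : ℂ) =
      ((Complex.exp ((x : ℂ) * I) - ∑ m ∈ range 6, ((x : ℂ) * I) ^ m / m.factorial) +
       (Complex.exp (-(x : ℂ) * I) - ∑ m ∈ range 6, (-(x : ℂ) * I) ^ m / m.factorial)) / 2 := by
    rw [Complex.ofReal_sub, Complex.ofReal_cos, Complex.cos]
    simp only [sum_range_succ, range_zero, sum_empty, Nat.factorial]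
    push_cast
    ring_nf
    simp [Complex.I_sq]
    ring_nf
  have : |Real.cos x - (1 - x ^ 2 / 2 + x ^ 4 / 24)| =
      ‖((Real.cos x - (1 - x ^ 2 / 2 + x ^ 4 / 24) : ℝ) : ℂ)‖ := by
    rw [Complex.norm_real, Real.norm_eq_abs]
  rw [this, hid]
  have hax : ‖(x:ℂ)*I‖ = |x| := by simp
  calc ‖_‖ ≤ (‖Complex.exp ((x : ℂ) * I) - ∑ m ∈ range 6, ((x : ℂ) * I) ^ m / m.factorial‖ +
        ‖Complex.exp (-(x : ℂ) * I) - ∑ m ∈ range 6, (-(x : ℂ) * I) ^ m / m.factorial‖) / 2 := by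
        rw [norm_div, Complex.norm_two]
        gcongr
        exact norm_add_le _ _
    _ ≤ (|x| ^ 6 * ((Nat.succ 6 : ℝ) * ((Nat.factorial 6 : ℝ) * 6)⁻¹) +
         |x| ^ 6 * ((Nat.succ 6 : ℝ) * ((Nat.factorial 6 : ℝ) * 6)⁻¹)) / 2 := by
        gcongr <;> [skip; skip]
        · refine h1.trans (le_of_eq ?_); norm_num [hax]
        · refine h2.trans (le_of_eq ?_); norm_num [hax]
    _ ≤ |x| ^ 6 := by
        have : (0:ℝ) ≤ |x| ^ 6 := by positivity
        norm_num [Nat.factorial]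
        nlinarith


theorem compact_scheme_symbol_fourth_order (a b k : ℝ) (hk : a ^ 2 + b ^ 2 = k ^ 2) :
    (fun h : ℝ =>
      (2 * Real.cos (a * h) + 2 * Real.cos (b * h) - 4) / h ^ 2 +
      (4 * Real.cos (a * h) * Real.cos (b * h) + 4 - 4 * Real.cos (a * h)
        - 4 * Real.cos (b * h)) / (6 * h ^ 2) +
      (k ^ 2 / 12) * (2 * Real.cos (a * h) + 2 * Real.cos (b * h) + 8))
      =O[nhdsWithin 0 (Set.Ioi (0 : ℝ))] (fun h : ℝ => h ^ 4) := by
  rw [← hk]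
  rw [isBigO_iff]
  refine ⟨((a^2+b^2)*(a^2-b^2)^2/24 + a^4*b^4/144
      + a^6*(16+a^2+b^2) + b^6*(16+a^2+b^2) + 4*a^6*b^6) / 6, ?_⟩
  have hδ : (0:ℝ) < min 1 (min (1/(|a|+1)) (1/(|b|+1))) := by positivity
  filter_upwards [Ioo_mem_nhdsGT_of_mem (Set.mem_Ico.mpr ⟨le_refl 0, hδ⟩)] with h hh
  obtain ⟨hh0, hh2⟩ := hh
  have hh1 : h ≤ 1 := le_trans hh2.le (min_le_left _ _)
  have hha : h ≤ 1/(|a|+1) := le_trans hh2.le (le_trans (min_le_right _ _) (min_le_left _ _))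
  have hhb : h ≤ 1/(|b|+1) := le_trans hh2.le (le_trans (min_le_right _ _) (min_le_right _ _))
  clear hh2 hδ
  have hah : |a*h| ≤ 1 := by
    rw [abs_mul, abs_of_pos hh0]
    rw [le_div_iff₀ (by positivity)] at hha
    nlinarith [abs_nonneg a]
  have hbh : |b*h| ≤ 1 := by
    rw [abs_mul, abs_of_pos hh0]
    rw [le_div_iff₀ (by positivity)] at hhb
    nlinarith [abs_nonneg b]
  clear hha hhb
  have hEa := cos6_bound hah
  have hEb := cos6_bound hbh
  have hpow6a : |a*h|^6 = a^6*h^6 := by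
    rw [abs_mul, abs_of_pos hh0, mul_pow, pow_abs, abs_of_nonneg (by positivity)]
  have hpow6b : |b*h|^6 = b^6*h^6 := by
    rw [abs_mul, abs_of_pos hh0, mul_pow, pow_abs, abs_of_nonneg (by positivity)]
  rw [hpow6a] at hEa
  rw [hpow6b] at hEb
  clear hpow6a hpow6b
  have ha2 : (a*h)^2 ≤ 1 := by nlinarith [sq_abs (a*h), abs_nonneg (a*h)]
  have hb2 : (b*h)^2 ≤ 1 := by nlinarith [sq_abs (b*h), abs_nonneg (b*h)]
  have ha4 : (a*h)^4 ≤ 1 := by nlinarith [sq_nonneg (a*h)]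
  have hb4 : (b*h)^4 ≤ 1 := by nlinarith [sq_nonneg (b*h)]
  have hsq : h^2 ≤ 1 := by nlinarith
  have h6le : h^6 ≤ 1 := by nlinarith [pow_pos hh0 2, pow_pos hh0 4]
  clear hah hbh
  set Pa : ℝ := 1 - (a*h)^2/2 + (a*h)^4/24 with hPadef
  set Pb : ℝ := 1 - (b*h)^2/2 + (b*h)^4/24 with hPbdef
  have hPaB : |Pa| ≤ 2 := by rw [hPadef]; exact poly_bound ha2 ha4
  have hPbB : |Pb| ≤ 2 := by rw [hPbdef]; exact poly_bound hb2 hb4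
  have hab2h : (a^2+b^2)*h^2 ≤ a^2+b^2 := by
    nlinarith [mul_le_mul_of_nonneg_left hsq (show (0:ℝ) ≤ a^2+b^2 by positivity)]
  have hab2h0 : 0 ≤ (a^2+b^2)*h^2 := by positivity
  have hαB : |8 + 4*Pb + (a^2+b^2)*h^2| ≤ 16 + a^2 + b^2 := by
    have := lin_bound hPbB hab2h0 hab2h; linarith [abs_nonneg (8 + 4*Pb + (a^2+b^2)*h^2)]
  have hβB : |8 + 4*Pa + (a^2+b^2)*h^2| ≤ 16 + a^2 + b^2 := by
    have := lin_bound hPaB hab2h0 hab2h; linarith [abs_nonneg (8 + 4*Pa + (a^2+b^2)*h^2)]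
  set Ea : ℝ := Real.cos (a*h) - Pa with hEadef
  set Eb : ℝ := Real.cos (b*h) - Pb with hEbdef
  set N : ℝ := h^6 * ((a^2+b^2)*(a^2-b^2)^2/24 + h^2*a^4*b^4/144)
      + Ea*(8 + 4*Pb + (a^2+b^2)*h^2) + Eb*(8 + 4*Pa + (a^2+b^2)*h^2) + 4*Ea*Eb with hNdef
  have key : (2 * Real.cos (a * h) + 2 * Real.cos (b * h) - 4) / h ^ 2 +
      (4 * Real.cos (a * h) * Real.cos (b * h) + 4 - 4 * Real.cos (a * h)
        - 4 * Real.cos (b * h)) / (6 * h ^ 2) +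
      ((a^2+b^2) / 12) * (2 * Real.cos (a * h) + 2 * Real.cos (b * h) + 8)
      = N / (6 * h^2) := by
    have hca : Real.cos (a*h) = Pa + Ea := by rw [hEadef]; ring
    have hcb : Real.cos (b*h) = Pb + Eb := by rw [hEbdef]; ring
    rw [hNdef, hca, hcb, hPadef, hPbdef]
    field_simp
    ring
  have t1 : |h^6 * ((a^2+b^2)*(a^2-b^2)^2/24 + h^2*a^4*b^4/144)|
      ≤ ((a^2+b^2)*(a^2-b^2)^2/24 + a^4*b^4/144) * h^6 := by
    rw [abs_mul, abs_of_nonneg (by positivity : (0:ℝ) ≤ h^6),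
      abs_of_nonneg (by positivity), mul_comm]
    apply mul_le_mul_of_nonneg_right _ (by positivity : (0:ℝ) ≤ h^6)
    linarith [mul_le_mul_of_nonneg_right hsq (show (0:ℝ) ≤ a^4*b^4 by positivity)]
  have t2 : |Ea*(8 + 4*Pb + (a^2+b^2)*h^2)| ≤ a^6*(16+a^2+b^2) * h^6 := by
    rw [abs_mul]
    calc |Ea| * |8 + 4*Pb + (a^2+b^2)*h^2| ≤ (a^6*h^6) * (16 + a^2 + b^2) :=
          mul_le_mul hEa hαB (abs_nonneg _) (by positivity)
      _ = a^6*(16+a^2+b^2) * h^6 := by ring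
  have t3 : |Eb*(8 + 4*Pa + (a^2+b^2)*h^2)| ≤ b^6*(16+a^2+b^2) * h^6 := by
    rw [abs_mul]
    calc |Eb| * |8 + 4*Pa + (a^2+b^2)*h^2| ≤ (b^6*h^6) * (16 + a^2 + b^2) :=
          mul_le_mul hEb hβB (abs_nonneg _) (by positivity)
      _ = b^6*(16+a^2+b^2) * h^6 := by ring
  have t4 : |4*Ea*Eb| ≤ 4*a^6*b^6 * h^6 := by
    have h4e : |4*Ea*Eb| = 4*(|Ea| * |Eb|) := by
      rw [abs_mul, abs_mul]
      norm_num [mul_assoc]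
    rw [h4e]
    have hprod : |Ea| * |Eb| ≤ (a^6*h^6) * (b^6*h^6) :=
      mul_le_mul hEa hEb (abs_nonneg _) (by positivity)
    have h12 : (a^6*h^6) * (b^6*h^6) ≤ a^6*b^6*h^6 := by
      have h66 : h^6 * h^6 ≤ h^6 := mul_le_of_le_one_left (by positivity) h6le
      linarith [mul_le_mul_of_nonneg_left h66 (show (0:ℝ) ≤ a^6*b^6 by positivity)]
    linarith [le_trans hprod h12]
  have hN : |N| ≤ ((a^2+b^2)*(a^2-b^2)^2/24 + a^4*b^4/144
      + a^6*(16+a^2+b^2) + b^6*(16+a^2+b^2) + 4*a^6*b^6) * h^6 := by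
    have s1 : |N| ≤ |h^6 * ((a^2+b^2)*(a^2-b^2)^2/24 + h^2*a^4*b^4/144)
        + Ea*(8 + 4*Pb + (a^2+b^2)*h^2) + Eb*(8 + 4*Pa + (a^2+b^2)*h^2)| + |4*Ea*Eb| := by
      rw [hNdef]; exact abs_add_le _ _
    have s2 : |h^6 * ((a^2+b^2)*(a^2-b^2)^2/24 + h^2*a^4*b^4/144)
        + Ea*(8 + 4*Pb + (a^2+b^2)*h^2) + Eb*(8 + 4*Pa + (a^2+b^2)*h^2)|
        ≤ |h^6 * ((a^2+b^2)*(a^2-b^2)^2/24 + h^2*a^4*b^4/144)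
        + Ea*(8 + 4*Pb + (a^2+b^2)*h^2)| + |Eb*(8 + 4*Pa + (a^2+b^2)*h^2)| := abs_add_le _ _
    have s3 : |h^6 * ((a^2+b^2)*(a^2-b^2)^2/24 + h^2*a^4*b^4/144)
        + Ea*(8 + 4*Pb + (a^2+b^2)*h^2)|
        ≤ |h^6 * ((a^2+b^2)*(a^2-b^2)^2/24 + h^2*a^4*b^4/144)|
        + |Ea*(8 + 4*Pb + (a^2+b^2)*h^2)| := abs_add_le _ _
    linarith
  rw [Real.norm_eq_abs, Real.norm_eq_abs, key, abs_div,
    abs_of_nonneg (by positivity : (0:ℝ) ≤ 6*h^2),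
    abs_of_nonneg (by positivity : (0:ℝ) ≤ h^4),
    div_le_iff₀ (by positivity)]
  calc |N| ≤ ((a^2+b^2)*(a^2-b^2)^2/24 + a^4*b^4/144
      + a^6*(16+a^2+b^2) + b^6*(16+a^2+b^2) + 4*a^6*b^6) * h^6 := hN
    _ = ((a^2+b^2)*(a^2-b^2)^2/24 + a^4*b^4/144
      + a^6*(16+a^2+b^2) + b^6*(16+a^2+b^2) + 4*a^6*b^6) / 6 * h^4 * (6*h^2) := by ring
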